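/- Let X and Y be positive definite complex n×n matrices and let M be an invertible complex n×n matrix. Then D_op(M X Mᴴ ‖ M Y Mᴴ) = M · D_op(X‖Y) · Mᴴ. -/

import Mathlib

open Matrix Kronecker
open scoped ComplexOrder

noncomputable section

/-- Apply a real function to a complex matrix via the spectral decomposition
(meaningful for Hermitian matrices; defined as `0` otherwise). -/
def matFun {n : Type*} [Fintype n] [DecidableEq n]
    (f : ℝ → ℝ) (A : Matrix n n ℂ) : Matrix n n ℂ :=
  if hA : A.IsHermitian then
    (hA.eigenvectorUnitary : Matrix n n ℂ) *
      Matrix.diagonal (fun i => (f (hA.eigenvalues i) : ℂ)) *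
      (hA.eigenvectorUnitary : Matrix n n ℂ)ᴴ
  else 0

/-- Real power of a matrix (via the spectral decomposition). -/
def mpow {n : Type*} [Fintype n] [DecidableEq n] (A : Matrix n n ℂ) (t : ℝ) :
    Matrix n n ℂ :=
  matFun (fun x => x ^ t) A

/-- Logarithm of a matrix (via the spectral decomposition). -/
def mlog {n : Type*} [Fintype n] [DecidableEq n] (A : Matrix n n ℂ) : Matrix n n ℂ :=
  matFun Real.log A

/-- The operator relative entropy `D_op(X‖Y) = X^{1/2} log(X^{1/2} Y⁻¹ X^{1/2}) X^{1/2}`. -/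
def Dop {n : Type*} [Fintype n] [DecidableEq n] (X Y : Matrix n n ℂ) : Matrix n n ℂ :=
  mpow X (1/2) * mlog (mpow X (1/2) * Y⁻¹ * mpow X (1/2)) * mpow X (1/2)

/-- The Belavkin--Staszewski relative entropy `D̂(ρ‖σ) = Re Tr[D_op(ρ‖σ)]`. -/
def BSEntropy {n : Type*} [Fintype n] [DecidableEq n] (ρ σ : Matrix n n ℂ) : ℝ :=
  (Dop ρ σ).trace.re

/-- The weighted matrix geometric mean `G_t(X,Y) = X^{1/2} (X^{-1/2} Y X^{-1/2})^t X^{1/2}`. -/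
def geoMean {n : Type*} [Fintype n] [DecidableEq n] (t : ℝ) (X Y : Matrix n n ℂ) :
    Matrix n n ℂ :=
  mpow X (1/2) * mpow (mpow X (-(1/2)) * Y * mpow X (-(1/2))) t * mpow X (1/2)

/-- Partial trace over the second (B) factor. -/
def ptraceB {R B : Type*} [Fintype B] (M : Matrix (R × B) (R × B) ℂ) : Matrix R R ℂ :=
  Matrix.of fun r r' => ∑ b, M (r, b) (r', b)

/-- Partial trace over the first (R) factor. -/
def ptraceR {R A : Type*} [Fintype R] (M : Matrix (R × A) (R × A) ℂ) : Matrix A A ℂ :=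
  Matrix.of fun a a' => ∑ r, M (r, a) (r, a')

/-- The map associated to a Choi matrix `J` (indexed by `(A × B) × (A × B)`), applied to a
matrix indexed by `(R × A) × (R × A)`. -/
def choiMap {R A B : Type*} [Fintype A] (J : Matrix (A × B) (A × B) ℂ)
    (X : Matrix (R × A) (R × A) ℂ) : Matrix (R × B) (R × B) ℂ :=
  Matrix.of fun p q => ∑ a, ∑ a', X (p.1, a) (q.1, a') * J (a, p.2) (a', q.2)

/-!
With `S = X^{1/2}` and `T = (M X Mᴴ)^{1/2}`, the matrix `V = T⁻¹ M S` is unitary, because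
`V Vᴴ = T⁻¹ (M X Mᴴ) T⁻¹ = 1`. Hence `M S = T V`, and `T (M Y Mᴴ)⁻¹ T = V (S Y⁻¹ S) Vᴴ`.
The logarithm, like every spectral function, commutes with unitary conjugation, so
`T log(T (M Y Mᴴ)⁻¹ T) T = (T V) log(S Y⁻¹ S) (T V)ᴴ = M S log(S Y⁻¹ S) S Mᴴ`.
-/

namespace Matrix

variable {n : Type*} [Fintype n] [DecidableEq n]

lemma matFun_eq_cfc (f : ℝ → ℝ) {A : Matrix n n ℂ} (hA : A.IsHermitian) :
    matFun f A = cfc f A := by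
  rw [hA.cfc_eq, matFun, dif_pos hA]
  rfl

lemma isHermitian_matFun (f : ℝ → ℝ) (A : Matrix n n ℂ) : (matFun f A).IsHermitian := by
  by_cases hA : A.IsHermitian
  · rw [matFun_eq_cfc f hA]
    exact cfc_predicate f A
  · rw [matFun, dif_neg hA]
    exact isHermitian_zero

lemma isHermitian_mul_mul_conjTranspose_iff {U A : Matrix n n ℂ} (hU : U ∈ unitaryGroup n ℂ) :
    (U * A * Uᴴ).IsHermitian ↔ A.IsHermitian := by
  refine ⟨fun h => ?_, fun h => isHermitian_mul_mul_conjTranspose U h⟩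
  have hUU : Uᴴ * U = 1 := mem_unitaryGroup_iff'.mp hU
  have hA : Uᴴ * (U * A * Uᴴ) * U = A := by
    simp only [← mul_assoc, hUU, one_mul]
    rw [mul_assoc, hUU, mul_one]
  simpa only [hA] using isHermitian_conjTranspose_mul_mul U h

lemma matFun_mul_mul_conjTranspose (f : ℝ → ℝ) {U : Matrix n n ℂ} (hU : U ∈ unitaryGroup n ℂ)
    (A : Matrix n n ℂ) : matFun f (U * A * Uᴴ) = U * matFun f A * Uᴴ := by
  by_cases hA : A.IsHermitian
  · rw [matFun_eq_cfc f hA, matFun_eq_cfc f ((isHermitian_mul_mul_conjTranspose_iff hU).mpr hA)]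
    exact (StarAlgHomClass.map_cfc (Unitary.conjStarAlgAut ℂ _ ⟨U, hU⟩) f A
      (A.finite_real_spectrum.continuousOn f) (by fun_prop : Continuous (U * · * Uᴴ))).symm
  · rw [matFun, matFun, dif_neg hA, dif_neg (mt (isHermitian_mul_mul_conjTranspose_iff hU).mp hA),
      mul_zero, zero_mul]

lemma mpow_half_mul_self {A : Matrix n n ℂ} (hA : A.PosSemidef) :
    mpow A (1/2) * mpow A (1/2) = A := by
  have : IsSelfAdjoint A := hA.1
  have hcont := A.finite_real_spectrum.continuousOn (fun x : ℝ => x ^ (1/2 : ℝ))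
  rw [mpow, matFun_eq_cfc _ hA.1, ← cfc_mul _ _ A hcont hcont]
  conv_rhs => rw [← cfc_id' ℝ A]
  refine cfc_congr fun x hx => ?_
  obtain ⟨i, rfl⟩ := hA.1.spectrum_real_eq_range_eigenvalues ▸ hx
  rw [← Real.sqrt_eq_rpow, Real.mul_self_sqrt (hA.eigenvalues_nonneg i)]

lemma exists_mem_unitaryGroup_mul_eq {R : Type*} [CommRing R] [StarRing R]
    {S T M : Matrix n n R} (hS : S.IsHermitian) (hT : T.IsHermitian) (hTu : IsUnit T)
    (h : T * T = M * (S * S) * Mᴴ) : ∃ V ∈ unitaryGroup n R, M * S = T * V := by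
  have hdet : IsUnit T.det := (isUnit_iff_isUnit_det T).mp hTu
  refine ⟨T⁻¹ * M * S, ?_, ?_⟩
  · rw [mem_unitaryGroup_iff, star_eq_conjTranspose]
    calc T⁻¹ * M * S * (T⁻¹ * M * S)ᴴ = T⁻¹ * (M * (S * S) * Mᴴ) * T⁻¹ := by
          simp only [conjTranspose_mul, conjTranspose_nonsing_inv, hS.eq, hT.eq, mul_assoc]
      _ = 1 := by rw [← h, mul_assoc, mul_nonsing_inv_cancel_right _ _ hdet, nonsing_inv_mul _ hdet]
  · rw [← mul_assoc, ← mul_assoc, mul_nonsing_inv _ hdet, one_mul]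

lemma mul_inv_mul_mul_conjTranspose_mul_eq {R : Type*} [CommRing R] [StarRing R]
    {S T M V : Matrix n n R} (hS : S.IsHermitian) (hT : T.IsHermitian) (hM : IsUnit M)
    (hV : V ∈ unitaryGroup n R) (h : M * S = T * V) (Y : Matrix n n R) :
    T * (M * Y * Mᴴ)⁻¹ * T = V * (S * Y⁻¹ * S) * Vᴴ := by
  have hVV : V * Vᴴ = 1 := mem_unitaryGroup_iff.mp hV
  have hMinvT : M⁻¹ * T = S * Vᴴ :=
    calc M⁻¹ * T = M⁻¹ * (T * V * Vᴴ) := by rw [mul_assoc T, hVV, mul_one]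
      _ = S * Vᴴ := by
        rw [← h, ← mul_assoc, ← mul_assoc, nonsing_inv_mul _ ((isUnit_iff_isUnit_det M).mp hM),
          one_mul]
  have hTMinv : T * (Mᴴ)⁻¹ = V * S := by
    simpa only [conjTranspose_mul, conjTranspose_nonsing_inv, hS.eq, hT.eq,
      conjTranspose_conjTranspose] using congrArg conjTranspose hMinvT
  calc T * (M * Y * Mᴴ)⁻¹ * T = (T * (Mᴴ)⁻¹) * Y⁻¹ * (M⁻¹ * T) := by
        simp only [Matrix.mul_inv_rev, mul_assoc]
    _ = V * (S * Y⁻¹ * S) * Vᴴ := by rw [hTMinv, hMinvT]; simp only [mul_assoc]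

end Matrix

theorem Dop_conj_invertible_general {n : ℕ}
    (X Y : Matrix (Fin n) (Fin n) ℂ) (hX : X.PosDef)
    (M : Matrix (Fin n) (Fin n) ℂ) (hM : IsUnit M) :
    Dop (M * X * Mᴴ) (M * Y * Mᴴ) = M * Dop X Y * Mᴴ := by
  set S := mpow X (1/2)
  set T := mpow (M * X * Mᴴ) (1/2)
  have hS : S.IsHermitian := isHermitian_matFun _ _
  have hT : T.IsHermitian := isHermitian_matFun _ _
  have hSS : S * S = X := mpow_half_mul_self hX.posSemidef
  have hTT : T * T = M * X * Mᴴ := mpow_half_mul_self (hX.posSemidef.mul_mul_conjTranspose_same M)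
  have hTu : IsUnit T := isUnit_of_mul_isUnit_left (y := T) <| by
    rw [hTT]
    exact (hM.mul hX.isUnit).mul hM.star
  obtain ⟨V, hV, hMS⟩ : ∃ V ∈ unitaryGroup (Fin n) ℂ, M * S = T * V :=
    exists_mem_unitaryGroup_mul_eq hS hT hTu (by rw [hTT, hSS])
  have hSM : S * Mᴴ = Vᴴ * T := by
    simpa only [conjTranspose_mul, hS.eq, hT.eq] using congrArg conjTranspose hMS
  calc Dop (M * X * Mᴴ) (M * Y * Mᴴ) = T * mlog (T * (M * Y * Mᴴ)⁻¹ * T) * T := rfl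
    _ = (T * V) * mlog (S * Y⁻¹ * S) * (Vᴴ * T) := by
      rw [mul_inv_mul_mul_conjTranspose_mul_eq hS hT hM hV hMS, mlog, mlog,
        matFun_mul_mul_conjTranspose _ hV]
      simp only [mul_assoc]
    _ = M * (S * mlog (S * Y⁻¹ * S) * S) * Mᴴ := by
      rw [← hMS, ← hSM]
      simp only [mul_assoc]
    _ = M * Dop X Y * Mᴴ := rfl

/-- transformer equality for the operator relative entropy:
`D_op(M X Mᴴ ‖ M Y Mᴴ) = M · D_op(X‖Y) · Mᴴ` for invertible `M`. -/
theorem Dop_conj_invertible {n : ℕ}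
    (X Y : Matrix (Fin n) (Fin n) ℂ) (hX : X.PosDef) (hY : Y.PosDef)
    (M : Matrix (Fin n) (Fin n) ℂ) (hM : IsUnit M) :
    Dop (M * X * Mᴴ) (M * Y * Mᴴ) = M * Dop X Y * Mᴴ :=
  Dop_conj_invertible_general X Y hX M hM
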